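/- arXiv:2504.19078 — 2 statements merged into one kernel-verified Lean document; each statement's English description precedes it below -/
import Mathlib

section
/- With R = ℤ[h,t]U_p/I as in the universal extended Frobenius algebra (where I is generated by [α][α'] − h([α]+[α']−[min{α,α'}]), [α₁]−[α₂] for units of equal level, and 2[α]), and V = R ⊕ Rx with the stated structure maps and φ_α(A + Bx) = A + B[α] + Bx, the map φ_α is an algebra automorphism: φ_α(m(v,w)) = m(φ_α(v), φ_α(w)) for all v, w ∈ V. -/
noncomputable section

open MvPolynomial

/-- `U_p ⊆ ℤ_pˣ`: the units of `ℤ_p` which are `≡ 1 mod p` (the kernel of reduction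
of units mod `p`). -/
def Up (p : ℕ) [Fact p.Prime] : Subgroup ℤ_[p]ˣ :=
  MonoidHom.ker (Units.map (PadicInt.toZMod (p := p)).toMonoidHom)

/-- The underlying `p`-adic integer of an element of `U_p`. -/
def upVal {p : ℕ} [Fact p.Prime] (u : Up p) : ℤ_[p] := ((u : ℤ_[p]ˣ) : ℤ_[p])

/-- `u` and `v` have the same level: for all `r`, `p^r ∣ u - 1 ↔ p^r ∣ v - 1`. -/
def SameLevel {p : ℕ} [Fact p.Prime] (u v : Up p) : Prop :=
  ∀ r : ℕ, ((p : ℤ_[p]) ^ r ∣ (upVal u - 1) ↔ (p : ℤ_[p]) ^ r ∣ (upVal v - 1))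

/-- `w` has level `min(level u, level v)`. -/
def MinLevel {p : ℕ} [Fact p.Prime] (w u v : Up p) : Prop :=
  ∀ r : ℕ, ((p : ℤ_[p]) ^ r ∣ (upVal w - 1) ↔
    ((p : ℤ_[p]) ^ r ∣ (upVal u - 1) ∧ (p : ℤ_[p]) ^ r ∣ (upVal v - 1)))

/-- The group ring `ℤ[h,t]U_p`. -/
abbrev GrpRing (p : ℕ) [Fact p.Prime] : Type :=
  MonoidAlgebra (MvPolynomial (Fin 2) ℤ) (Up p)

/-- The image `[α]` of `α ∈ U_p` in the group ring. -/
def cls' {p : ℕ} [Fact p.Prime] (u : Up p) : GrpRing p :=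
  MonoidAlgebra.of (MvPolynomial (Fin 2) ℤ) (Up p) u

/-- The variable `h` in the group ring. -/
def hGR (p : ℕ) [Fact p.Prime] : GrpRing p :=
  algebraMap (MvPolynomial (Fin 2) ℤ) (GrpRing p) (X 0)

/-- The variable `t` in the group ring. -/
def tGR (p : ℕ) [Fact p.Prime] : GrpRing p :=
  algebraMap (MvPolynomial (Fin 2) ℤ) (GrpRing p) (X 1)

/-- The ideal `I` generated by `[α][α'] − h([α]+[α']−[min{α,α'}])`,
`[α₁]−[α₂]` for units of equal level, and `2[α]`. -/
def Irel (p : ℕ) [Fact p.Prime] : Ideal (GrpRing p) :=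
  Ideal.span
    ({x | ∃ u v w : Up p, MinLevel w u v ∧
        x = cls' u * cls' v - hGR p * (cls' u + cls' v - cls' w)} ∪
     {x | ∃ u v : Up p, SameLevel u v ∧ x = cls' u - cls' v} ∪
     {x | ∃ u : Up p, x = 2 * cls' u})

/-- `R = ℤ[h,t]U_p/I`. -/
abbrev RU (p : ℕ) [Fact p.Prime] : Type := GrpRing p ⧸ Irel p

/-- `[α]` in `R`. -/
def cls {p : ℕ} [Fact p.Prime] (u : Up p) : RU p := Ideal.Quotient.mk (Irel p) (cls' u)
/-- `h` in `R`. -/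
def hR (p : ℕ) [Fact p.Prime] : RU p := Ideal.Quotient.mk (Irel p) (hGR p)
/-- `t` in `R`. -/
def tR (p : ℕ) [Fact p.Prime] : RU p := Ideal.Quotient.mk (Irel p) (tGR p)

/-- `V = R ⊕ Rx`; `(A,B)` stands for `A + Bx`. -/
abbrev VU (p : ℕ) [Fact p.Prime] : Type := RU p × RU p

/-- `m(A+Bx, C+Dx) = AC + BDt + (AD+BC+BDh)x`. -/
def mU {p : ℕ} [Fact p.Prime] (v w : VU p) : VU p :=
  (v.1 * w.1 + v.2 * w.2 * tR p, v.1 * w.2 + v.2 * w.1 + v.2 * w.2 * hR p)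

/-- `φ_α(A + Bx) = A + B[α] + Bx`. -/
def phiU {p : ℕ} [Fact p.Prime] (u : Up p) (v : VU p) : VU p :=
  (v.1 + v.2 * cls u, v.2)

lemma cls_mul_cls_of_minLevel {p : ℕ} [Fact p.Prime] {u v w : Up p} (huvw : MinLevel w u v) :
    cls u * cls v = hR p * (cls u + cls v - cls w) := by
  have hmem : cls' u * cls' v - hGR p * (cls' u + cls' v - cls' w) ∈ Irel p :=
    Ideal.subset_span (Or.inl (Or.inl ⟨u, v, w, huvw, rfl⟩))
  rw [← Ideal.Quotient.eq_zero_iff_mem, map_sub, sub_eq_zero] at hmem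
  simpa only [cls, hR, map_mul, map_add, map_sub] using hmem

lemma minLevel_self {p : ℕ} [Fact p.Prime] (u : Up p) : MinLevel u u u :=
  fun _ => and_self_iff.symm

lemma cls_mul_self {p : ℕ} [Fact p.Prime] (u : Up p) : cls u * cls u = hR p * cls u := by
  rw [cls_mul_cls_of_minLevel (minLevel_self u), add_sub_cancel_right]

lemma two_mul_cls {p : ℕ} [Fact p.Prime] (u : Up p) : 2 * cls u = 0 := by
  rw [cls, ← map_ofNat (Ideal.Quotient.mk (Irel p)) 2, ← map_mul,
    Ideal.Quotient.eq_zero_iff_mem]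
  exact Ideal.subset_span (Or.inr ⟨u, rfl⟩)

/-- In the universal extended Frobenius algebra, `φ_α` is an algebra automorphism:
`φ_α(m(v,w)) = m(φ_α(v), φ_α(w))`. -/
theorem phiU_mul (p : ℕ) [Fact p.Prime] (u : Up p) (v w : VU p) :
    phiU u (mU v w) = mU (phiU u v) (phiU u w) := by
  obtain ⟨A, B⟩ := v
  obtain ⟨C, D⟩ := w
  simp only [phiU, mU, Prod.mk.injEq]
  -- the two sides differ by `BD([α]² − h[α])` and `BD · 2[α]` in the two components
  exact ⟨by linear_combination (-(B * D)) * cls_mul_self u,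
    by linear_combination (-(B * D)) * two_mul_cls u⟩

end
end

section
/- Let p be an odd prime, q = p^r, and F = F(x, y, s) the free group on three generators, with F₃ the third term of the descending q-central series. Let s₀ = s x^q [x,y] and α = 1 + mq for 0 ≤ m < q. Then the endomorphism of F determined by x ↦ x s^m, y ↦ y, s ↦ s sends s₀ to an element congruent to y^{-m} s₀^α y^m modulo F₃. -/
/-- The commutator `[a,b] = a⁻¹b⁻¹ab`. -/
def commE {G : Type*} [Group G] (a b : G) : G := a⁻¹ * b⁻¹ * a * b

/-- The descending `q`-central series, shifted: `qcs F q 0 = F₁ = F` and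
`qcs F q n` is `F_{n+1} = F_{n}^q [F_{n}, F]`. -/
def qcs (F : Type*) [Group F] (q : ℕ) : ℕ → Subgroup F
  | 0 => ⊤
  | n + 1 => Subgroup.closure ((fun x => x ^ q) '' ((qcs F q n : Set F))) ⊔
      ⁅qcs F q n, (⊤ : Subgroup F)⁆

section Helpers
variable {G : Type*} [Group G]

lemma commE_eq_one_of_commute {a b : G} (h : a * b = b * a) : commE a b = 1 := by
  unfold commE
  simp [mul_assoc, h]

lemma commute_of_commE_eq_one {a b : G} (h : commE a b = 1) : a * b = b * a := by
  unfold commE at h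
  have h2 : b * a * (a⁻¹ * b⁻¹ * a * b) = b * a * 1 := by rw [h]
  simpa [mul_assoc] using h2

lemma map_commE {H : Type*} [Group H] (f : G →* H) (a b : G) :
    f (commE a b) = commE (f a) (f b) := by simp [commE]

lemma comm_mul_left (hc : ∀ a b z : G, Commute (commE a b) z) (a b z : G) :
    commE (a * b) z = commE a z * commE b z := by
  calc commE (a * b) z = b⁻¹ * commE a z * (z⁻¹ * b * z) := by unfold commE; group
    _ = commE a z * b⁻¹ * (z⁻¹ * b * z) := by rw [← (hc a z b⁻¹).eq]
    _ = commE a z * commE b z := by unfold commE; group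

lemma comm_mul_right (hc : ∀ a b z : G, Commute (commE a b) z) (z a b : G) :
    commE z (a * b) = commE z a * commE z b := by
  calc commE z (a * b) = (z⁻¹ * b⁻¹ * z) * commE z a * b := by unfold commE; group
    _ = (z⁻¹ * b⁻¹ * z) * b * commE z a := by rw [mul_assoc (z⁻¹ * b⁻¹ * z), (hc z a b).eq, ← mul_assoc]
    _ = commE z b * commE z a := by unfold commE; group
    _ = commE z a * commE z b := (hc z b (commE z a)).eq

lemma comm_pow_left (hc : ∀ a b z : G, Commute (commE a b) z) (a z : G) (n : ℕ) :
    commE (a ^ n) z = (commE a z) ^ n := by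
  induction n with
  | zero => simp [commE]
  | succ n ih => rw [pow_succ, comm_mul_left hc, ih, pow_succ]

lemma comm_pow_right (hc : ∀ a b z : G, Commute (commE a b) z) (z a : G) (n : ℕ) :
    commE z (a ^ n) = (commE z a) ^ n := by
  induction n with
  | zero => simp [commE]
  | succ n ih => rw [pow_succ, comm_mul_right hc, ih, pow_succ]

lemma swap_base (a b : G) : b * a = a * b * commE b a := by unfold commE; group

lemma pow_mul_swap (hc : ∀ a b z : G, Commute (commE a b) z) (a b : G) (n : ℕ) :
    b ^ n * a = a * b ^ n * (commE b a) ^ n := by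
  induction n with
  | zero => simp
  | succ n ih =>
    calc b ^ (n+1) * a = b * (b ^ n * a) := by rw [pow_succ']; group
      _ = b * (a * b ^ n * commE b a ^ n) := by rw [ih]
      _ = (b * a) * b ^ n * commE b a ^ n := by group
      _ = (a * b * commE b a) * b ^ n * commE b a ^ n := by rw [← swap_base]
      _ = a * b * (commE b a * b ^ n) * commE b a ^ n := by group
      _ = a * b * (b ^ n * commE b a) * commE b a ^ n := by rw [(hc b a (b^n)).eq]
      _ = a * b ^ (n+1) * commE b a ^ (n+1) := by group

lemma mul_pow_eq (hc : ∀ a b z : G, Commute (commE a b) z) (a b : G) (n : ℕ) :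
    (a * b) ^ n = a ^ n * b ^ n * (commE b a) ^ (n.choose 2) := by
  induction n with
  | zero => simp
  | succ n ih =>
    have hch : (n+1).choose 2 = n.choose 2 + n := by
      rw [Nat.choose_succ_succ]; simp [Nat.add_comm]
    calc (a*b) ^ (n+1) = (a^n * b^n * commE b a ^ (n.choose 2)) * (a * b) := by
          rw [pow_succ, ih]
      _ = a^n * b^n * (commE b a ^ (n.choose 2) * a) * b := by group
      _ = a^n * b^n * (a * commE b a ^ (n.choose 2)) * b := by
          rw [((hc b a a).pow_left _).eq]
      _ = a^n * (b^n * a) * (commE b a ^ (n.choose 2) * b) := by group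
      _ = a^n * (a * b^n * commE b a ^ n) * (b * commE b a ^ (n.choose 2)) := by
          rw [pow_mul_swap hc a b n, ((hc b a b).pow_left _).eq]
      _ = a^(n+1) * (b^n * (commE b a ^ n * b)) * commE b a ^ (n.choose 2) := by group
      _ = a^(n+1) * (b^n * (b * commE b a ^ n)) * commE b a ^ (n.choose 2) := by
          rw [((hc b a b).pow_left _).eq]
      _ = a^(n+1) * b^(n+1) * commE b a ^ ((n+1).choose 2) := by rw [hch]; group

end Helpers

section Main
variable {G : Type*} [Group G]

lemma abstract_main (q m : ℕ) (hoddq : Odd q)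
    (hc : ∀ a b z : G, Commute (commE a b) z)
    (hp : ∀ a z : G, Commute (a ^ q) z)
    (hqq : ∀ a : G, (a ^ q) ^ q = 1)
    (hcq : ∀ a b : G, (commE a b) ^ q = 1)
    (X Y S : G) :
    S * (X * S ^ m) ^ q * commE (X * S ^ m) Y =
      (Y ^ m)⁻¹ * (S * X ^ q * commE X Y) ^ (1 + m * q) * Y ^ m := by
  have hch : ∀ c : G, c ^ q = 1 → c ^ (q.choose 2) = 1 := by
    obtain ⟨k, hk⟩ := hoddq
    intro c h
    have h2 : q.choose 2 = q * k := by
      rw [Nat.choose_two_right]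
      have e1 : q - 1 = 2 * k := by omega
      have e2 : q * (q - 1) = 2 * (q * k) := by rw [e1]; ring
      rw [e2]; omega
    rw [h2, pow_mul, h, one_pow]
  have h1 : (X * S ^ m) ^ q = X ^ q * S ^ (m * q) := by
    rw [mul_pow_eq hc, hch _ (hcq _ _), mul_one, ← pow_mul]
  have h2 : commE (X * S ^ m) Y = commE X Y * (commE S Y) ^ m := by
    rw [comm_mul_left hc, comm_pow_left hc]
  have hXq : ∀ z : G, Commute (X ^ q) z := hp X
  have hK : ∀ z : G, Commute (commE X Y) z := hc X Y
  have hTm : ∀ z : G, Commute ((commE S Y) ^ m) z := fun z => (hc S Y z).pow_left m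
  have hM : ∀ z : G, Commute (S ^ (m * q)) z := fun z => by
    have e : S ^ (m * q) = (S ^ m) ^ q := pow_mul S m q
    rw [e]; exact hp (S ^ m) z
  have hB : ∀ z : G, Commute (X ^ q * commE X Y) z := fun z => (hXq z).mul_left (hK z)
  have hC : ∀ z : G, Commute (X ^ q * commE X Y * S ^ (m * q)) z := fun z =>
    (hB z).mul_left (hM z)
  have hAq : (S * (X ^ q * commE X Y)) ^ q = S ^ q := by
    rw [mul_pow_eq hc]
    have e1 : commE (X ^ q * commE X Y) S = 1 := commE_eq_one_of_commute (hB S).eq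
    rw [e1, one_pow, mul_one]
    have e2 : (X ^ q * commE X Y) ^ q = 1 := by
      rw [mul_pow_eq hc, commE_eq_one_of_commute (hK (X ^ q)).eq, one_pow, mul_one,
        hqq, hcq, one_mul]
    rw [e2, mul_one]
  have hmq : (S * X ^ q * commE X Y) ^ (m * q) = S ^ (m * q) := by
    rw [mul_comm m q, pow_mul, pow_mul, mul_assoc, hAq]
  have hA : (S * X ^ q * commE X Y) ^ (1 + m * q) =
      S * X ^ q * commE X Y * S ^ (m * q) := by
    rw [pow_add, pow_one, hmq]
  have hconj : (Y ^ m)⁻¹ * S * Y ^ m = S * (commE S Y) ^ m := by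
    rw [← comm_pow_right hc]; unfold commE; group
  rw [h1, h2, hA]
  have lhs_eq : S * (X ^ q * S ^ (m * q)) * (commE X Y * (commE S Y) ^ m) =
      S * X ^ q * commE X Y * ((commE S Y) ^ m * S ^ (m * q)) := by
    calc S * (X ^ q * S ^ (m * q)) * (commE X Y * (commE S Y) ^ m)
        = S * X ^ q * (S ^ (m * q) * commE X Y) * (commE S Y) ^ m := by group
      _ = S * X ^ q * (commE X Y * S ^ (m * q)) * (commE S Y) ^ m := by rw [(hM (commE X Y)).eq]
      _ = S * X ^ q * commE X Y * (S ^ (m * q) * (commE S Y) ^ m) := by group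
      _ = S * X ^ q * commE X Y * ((commE S Y) ^ m * S ^ (m * q)) := by
          rw [(hM ((commE S Y) ^ m)).eq]
  have rhs_eq : (Y ^ m)⁻¹ * (S * X ^ q * commE X Y * S ^ (m * q)) * Y ^ m =
      S * X ^ q * commE X Y * ((commE S Y) ^ m * S ^ (m * q)) := by
    calc (Y ^ m)⁻¹ * (S * X ^ q * commE X Y * S ^ (m * q)) * Y ^ m
        = (Y ^ m)⁻¹ * S * (X ^ q * commE X Y * S ^ (m * q) * Y ^ m) := by group
      _ = (Y ^ m)⁻¹ * S * (Y ^ m * (X ^ q * commE X Y * S ^ (m * q))) := by rw [(hC (Y ^ m)).eq]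
      _ = (Y ^ m)⁻¹ * S * Y ^ m * (X ^ q * (commE X Y * S ^ (m * q))) := by group
      _ = S * (commE S Y) ^ m * (X ^ q * (commE X Y * S ^ (m * q))) := by rw [hconj]
      _ = S * ((commE S Y) ^ m * (X ^ q * (commE X Y * S ^ (m * q)))) := by group
      _ = S * (X ^ q * (commE X Y * S ^ (m * q)) * (commE S Y) ^ m) := by
          rw [(hTm (X ^ q * (commE X Y * S ^ (m * q)))).eq]
      _ = S * X ^ q * commE X Y * (S ^ (m * q) * (commE S Y) ^ m) := by group
      _ = S * X ^ q * commE X Y * ((commE S Y) ^ m * S ^ (m * q)) := by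
          rw [(hM ((commE S Y) ^ m)).eq]
  rw [lhs_eq, rhs_eq]

end Main

section Concrete
variable {F : Type*} [Group F]
open scoped commutatorElement

lemma qcs_succ (q n : ℕ) : qcs F q (n + 1) =
    Subgroup.closure ((fun x => x ^ q) '' ((qcs F q n : Set F))) ⊔
      ⁅qcs F q n, (⊤ : Subgroup F)⁆ := rfl

lemma qcs_normal (q n : ℕ) : (qcs F q n).Normal := by
  induction n with
  | zero => exact (inferInstance : (⊤ : Subgroup F).Normal)
  | succ n ih =>
    haveI := ih
    have h1 : (Subgroup.closure ((fun x => x ^ q) '' ((qcs F q n : Set F)))).Normal := by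
      constructor
      intro a ha g
      refine Subgroup.closure_induction
        (p := fun a _ => g * a * g⁻¹ ∈
          Subgroup.closure ((fun x => x ^ q) '' ((qcs F q n : Set F)))) ?_ ?_ ?_ ?_ ha
      · rintro x ⟨w, hw, rfl⟩
        exact Subgroup.subset_closure ⟨g * w * g⁻¹, ih.conj_mem w hw g, by simp [conj_pow]⟩
      · simpa using Subgroup.one_mem _
      · intro u v hu hv pu pv
        have e : g * (u * v) * g⁻¹ = (g * u * g⁻¹) * (g * v * g⁻¹) := by group
        rw [e]; exact mul_mem pu pv
      · intro u hu pu
        have e : g * u⁻¹ * g⁻¹ = (g * u * g⁻¹)⁻¹ := by group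
        rw [e]; exact inv_mem pu
    rw [qcs_succ]
    exact @Subgroup.sup_normal _ _ _ _ h1 (Subgroup.commutator_normal _ _)

lemma commE_eq_commutator (a b : F) : commE a b = ⁅a⁻¹, b⁻¹⁆ := by
  rw [commutatorElement_def]; simp [commE]

lemma pow_mem_qcs1 (q : ℕ) (g : F) : g ^ q ∈ qcs F q 1 := by
  rw [show (1 : ℕ) = 0 + 1 from rfl, qcs_succ]
  exact Subgroup.mem_sup_left (Subgroup.subset_closure ⟨g, by simp [qcs], rfl⟩)

lemma commE_mem_qcs1 (q : ℕ) (g h : F) : commE g h ∈ qcs F q 1 := by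
  rw [show (1 : ℕ) = 0 + 1 from rfl, qcs_succ, commE_eq_commutator]
  exact Subgroup.mem_sup_right
    (Subgroup.commutator_mem_commutator (by simp [qcs]) (Subgroup.mem_top _))

lemma mem_qcs2_pow (q : ℕ) {a : F} (ha : a ∈ qcs F q 1) : a ^ q ∈ qcs F q 2 := by
  rw [show (2 : ℕ) = 1 + 1 from rfl, qcs_succ]
  exact Subgroup.mem_sup_left (Subgroup.subset_closure ⟨a, ha, rfl⟩)

lemma mem_qcs2_comm (q : ℕ) {a : F} (ha : a ∈ qcs F q 1) (b : F) :
    commE a b ∈ qcs F q 2 := by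
  rw [show (2 : ℕ) = 1 + 1 from rfl, qcs_succ, commE_eq_commutator]
  exact Subgroup.mem_sup_right
    (Subgroup.commutator_mem_commutator (inv_mem ha) (Subgroup.mem_top _))

end Concrete

local notation "FreeGroup3" => FreeGroup (Fin 3)

/-- For the free group `F = F(x,y,s)`, `q = p^r` with `p` an odd prime,
`s₀ = s x^q [x,y]` and `α = 1 + mq` with `0 ≤ m < q`, the endomorphism
`x ↦ x s^m, y ↦ y, s ↦ s` sends `s₀` to an element congruent to
`y^{-m} s₀^α y^m` modulo `F₃`. -/
theorem endo_s0_congruence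
    (p r : ℕ) (hp : p.Prime) (hodd : Odd p) (q : ℕ) (hq : q = p ^ r)
    (m : ℕ) (hm : m < q) :
    let x : FreeGroup (Fin 3) := FreeGroup.of 0
    let y : FreeGroup (Fin 3) := FreeGroup.of 1
    let s : FreeGroup (Fin 3) := FreeGroup.of 2
    let s₀ : FreeGroup (Fin 3) := s * x ^ q * commE x y
    let φ : FreeGroup (Fin 3) →* FreeGroup (Fin 3) := FreeGroup.lift ![x * s ^ m, y, s]
    (φ s₀)⁻¹ * ((y ^ m)⁻¹ * s₀ ^ (1 + m * q) * y ^ m) ∈ qcs (FreeGroup (Fin 3)) q 2 := by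
  intro x y s s₀ φ
  have hoddq : Odd q := hq ▸ hodd.pow
  haveI : (qcs FreeGroup3 q 2).Normal := qcs_normal q 2
  set π : FreeGroup3 →* FreeGroup3 ⧸ qcs FreeGroup3 q 2 := QuotientGroup.mk' (qcs FreeGroup3 q 2) with hπ
  suffices h : π (φ s₀) = π ((y ^ m)⁻¹ * s₀ ^ (1 + m * q) * y ^ m) by
    exact QuotientGroup.eq.mp h
  have hsurj : Function.Surjective π := QuotientGroup.mk'_surjective _
  have hone : ∀ w : FreeGroup3, w ∈ qcs FreeGroup3 q 2 → π w = 1 := fun w hw =>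
    (QuotientGroup.eq_one_iff w).mpr hw
  have hcentral : ∀ a : FreeGroup3, a ∈ qcs FreeGroup3 q 1 → ∀ Z, Commute (π a) Z := by
    intro a ha Z
    obtain ⟨b, rfl⟩ := hsurj Z
    have h1 : π (commE a b) = 1 := hone _ (mem_qcs2_comm q ha b)
    rw [map_commE] at h1
    exact commute_of_commE_eq_one h1
  have hc' : ∀ A B Z : FreeGroup3 ⧸ qcs FreeGroup3 q 2, Commute (commE A B) Z := by
    intro A B Z
    obtain ⟨a, rfl⟩ := hsurj A
    obtain ⟨b, rfl⟩ := hsurj B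
    rw [← map_commE]
    exact hcentral _ (commE_mem_qcs1 q a b) Z
  have hp' : ∀ A Z : FreeGroup3 ⧸ qcs FreeGroup3 q 2, Commute (A ^ q) Z := by
    intro A Z
    obtain ⟨a, rfl⟩ := hsurj A
    rw [← map_pow]
    exact hcentral _ (pow_mem_qcs1 q a) Z
  have hqq' : ∀ A : FreeGroup3 ⧸ qcs FreeGroup3 q 2, (A ^ q) ^ q = 1 := by
    intro A
    obtain ⟨a, rfl⟩ := hsurj A
    rw [← map_pow, ← map_pow]
    exact hone _ (mem_qcs2_pow q (pow_mem_qcs1 q a))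
  have hcq' : ∀ A B : FreeGroup3 ⧸ qcs FreeGroup3 q 2, (commE A B) ^ q = 1 := by
    intro A B
    obtain ⟨a, rfl⟩ := hsurj A
    obtain ⟨b, rfl⟩ := hsurj B
    rw [← map_commE, ← map_pow]
    exact hone _ (mem_qcs2_pow q (commE_mem_qcs1 q a b))
  have hφx : φ x = x * s ^ m := by
    show FreeGroup.lift ![x * s ^ m, y, s] (FreeGroup.of 0) = x * s ^ m
    rw [FreeGroup.lift_apply_of]
    rfl
  have hφy : φ y = y := by
    show FreeGroup.lift ![x * s ^ m, y, s] (FreeGroup.of 1) = y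
    rw [FreeGroup.lift_apply_of]
    rfl
  have hφs : φ s = s := by
    show FreeGroup.lift ![x * s ^ m, y, s] (FreeGroup.of 2) = s
    rw [FreeGroup.lift_apply_of]
    rfl
  have e : φ s₀ = s * (x * s ^ m) ^ q * commE (x * s ^ m) y := by
    show φ (s * x ^ q * commE x y) = _
    rw [map_mul, map_mul, map_pow, map_commE, hφx, hφy, hφs]
  have e1 : π (φ s₀) = π s * (π x * (π s) ^ m) ^ q * commE (π x * (π s) ^ m) (π y) := by
    rw [e, map_mul, map_mul, map_pow, map_commE, map_mul, map_pow]
  have e2 : π ((y ^ m)⁻¹ * s₀ ^ (1 + m * q) * y ^ m) =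
      ((π y) ^ m)⁻¹ * (π s * (π x) ^ q * commE (π x) (π y)) ^ (1 + m * q) * (π y) ^ m := by
    show π ((y ^ m)⁻¹ * (s * x ^ q * commE x y) ^ (1 + m * q) * y ^ m) = _
    rw [map_mul, map_mul, map_inv, map_pow, map_pow, map_mul, map_mul, map_pow, map_commE]
  rw [e1, e2]
  exact abstract_main q m hoddq hc' hp' hqq' hcq' (π x) (π y) (π s)
end
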